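/- arXiv:1809.01493 — 2 statements merged into one kernel-verified Lean document; each statement's English description precedes it below -/
import Mathlib

section
/- Let G be a group with a normal subgroup N such that N is isomorphic to the infinite cyclic group ℤ and the quotient G/N is isomorphic to ℤ. Then G is isomorphic either to ℤ × ℤ (the fundamental group of the torus) or to the Klein bottle group, i.e. the group presented as ⟨a, b | a b a b⁻¹⟩. -/
/-- The single relator `a * b * a * b⁻¹` of the Klein bottle group, in the free
group on two generators (`0` plays the role of `a`, `1` the role of `b`). -/
def kleinBottleRels : Set (FreeGroup (Fin 2)) :=
  {FreeGroup.of 0 * FreeGroup.of 1 * FreeGroup.of 0 * (FreeGroup.of 1)⁻¹}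

/-- The Klein bottle group `⟨a, b | a b a b⁻¹⟩`. -/
def KleinBottleGroup : Type := PresentedGroup kleinBottleRels

instance : Group KleinBottleGroup := by unfold KleinBottleGroup; infer_instance

/-!
Since `ℤ` is free, an extension `1 → ℤ → G → ℤ → 1` splits (lift a generator of the quotient),
so `G ≃* ℤ ⋊[φ] ℤ`. The action `φ` is determined by the image of the generator in
`Aut ℤ = {1, -1}`: the trivial action gives `ℤ × ℤ`, and the action by negation gives a group
whose presentation is `⟨a, b | b a b⁻¹ = a⁻¹⟩`, i.e. the Klein bottle group.
-/

open Multiplicative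

namespace GroupExtension

variable {K G Q : Type*} [Group K] [Group G] [Group Q]

def ofNormal (N : Subgroup G) [N.Normal] (e : K ≃* N) (q : G ⧸ N ≃* Q) :
    GroupExtension K G Q where
  inl := N.subtype.comp e.toMonoidHom
  rightHom := q.toMonoidHom.comp (QuotientGroup.mk' N)
  inl_injective := Subtype.val_injective.comp e.injective
  range_inl_eq_ker_rightHom := by
    rw [MonoidHom.range_comp, e.toMonoidHom.range_eq_top_of_surjective e.surjective,
      ← MonoidHom.range_eq_map, N.range_subtype,
      MonoidHom.ker_comp_of_injective _ _ q.injective, QuotientGroup.ker_mk']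
  rightHom_surjective := q.surjective.comp (QuotientGroup.mk'_surjective N)

noncomputable def splittingOfInt (S : GroupExtension K G (Multiplicative ℤ)) : S.Splitting where
  toMonoidHom := zpowersHom G (Function.surjInv S.rightHom_surjective (ofAdd 1))
  rightInverse_rightHom := DFunLike.congr_fun (f := S.rightHom.comp _) (g := MonoidHom.id _) <|
    MonoidHom.ext_mint (by simp [Function.surjInv_eq])

end GroupExtension

theorem MulAut.int_eq_one_or_eq_inv (f : MulAut (Multiplicative ℤ)) :
    f = 1 ∨ f = MulEquiv.inv _ := by
  obtain ⟨x, hx⟩ := f.surjective (ofAdd 1)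
  have hfx : f x = f (ofAdd 1) ^ x.toAdd := by
    rw [← map_zpow, ← ofAdd_zsmul, smul_eq_mul, mul_one, ofAdd_toAdd]
  have hunit : (f (ofAdd 1)).toAdd * x.toAdd = 1 := by
    rw [mul_comm, ← smul_eq_mul, ← toAdd_zpow, ← hfx, hx, toAdd_ofAdd]
  refine (Int.eq_one_or_neg_one_of_mul_eq_one hunit).imp (fun h ↦ ?_) (fun h ↦ ?_) <;>
  · apply MulEquiv.toMonoidHom_injective
    apply MonoidHom.ext_mint
    rw [MulEquiv.coe_toMonoidHom, ← ofAdd_toAdd (f _), h]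
    rfl

def intInvAction : Multiplicative ℤ →* MulAut (Multiplicative ℤ) :=
  zpowersHom _ (MulEquiv.inv _)

theorem MonoidHom.eq_one_or_eq_intInvAction (φ : Multiplicative ℤ →* MulAut (Multiplicative ℤ)) :
    φ = 1 ∨ φ = intInvAction :=
  (MulAut.int_eq_one_or_eq_inv (φ (ofAdd 1))).imp (fun h ↦ ext_mint (by simp [h]))
    (fun h ↦ ext_mint (by simp [h, intInvAction]))

theorem MulAut.zpow_apply_of_semiconj {M N : Type*} [Mul M] [Mul N] {f : M → N}
    {α : MulAut M} {β : MulAut N} (h : ∀ x, f (α x) = β (f x)) (k : ℤ) (x : M) :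
    f ((α ^ k) x) = (β ^ k) (f x) := by
  induction k using Int.induction_on generalizing x with
  | zero => rfl
  | succ k ih => rw [zpow_add_one, zpow_add_one, mul_apply, mul_apply, ih, h]
  | pred k ih =>
    have h_inv : f (α⁻¹ x) = β⁻¹ (f x) := by
      apply β.injective
      rw [← h, apply_inv_self, apply_inv_self]
    rw [sub_eq_add_neg, zpow_add, zpow_add, zpow_neg_one, zpow_neg_one, mul_apply, mul_apply, ih,
      h_inv]

theorem mul_mul_mul_inv_eq_one_iff {G : Type*} [Group G] {a b : G} :
    a * b * a * b⁻¹ = 1 ↔ b * a * b⁻¹ = a⁻¹ := by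
  rw [mul_assoc a b, mul_assoc a, mul_eq_one_iff_inv_eq, eq_comm]

theorem kleinBottleGroup_conj_eq_inv :
    (PresentedGroup.of 1 * PresentedGroup.of 0 * (PresentedGroup.of 1)⁻¹ :
      PresentedGroup kleinBottleRels) = (PresentedGroup.of 0)⁻¹ := by
  rw [← mul_mul_mul_inv_eq_one_iff]
  exact PresentedGroup.one_of_mem (rels := kleinBottleRels) rfl

open SemidirectProduct in
noncomputable def kleinBottleGroupMulEquiv :
    PresentedGroup kleinBottleRels ≃* Multiplicative ℤ ⋊[intInvAction] Multiplicative ℤ :=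
  MonoidHom.toMulEquiv
    (PresentedGroup.toGroup (f := ![inl (ofAdd 1), inr (ofAdd 1)]) <| by
      rintro r rfl
      simp only [map_mul, map_inv, FreeGroup.lift_apply_of, Matrix.cons_val_zero,
        Matrix.cons_val_one, mul_mul_mul_inv_eq_one_iff]
      rw [← map_inv inr, ← inl_aut]
      rfl)
    (lift (zpowersHom _ (.of 0)) (zpowersHom _ (.of 1)) fun g ↦ by
      ext
      have h_gen : ∀ x, zpowersHom _ (.of 0) (MulEquiv.inv _ x) =
          MulAut.conj (.of 1) (zpowersHom _ (.of 0) x : PresentedGroup kleinBottleRels) := by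
        intro x
        simp [← conj_zpow, kleinBottleGroup_conj_eq_inv]
      simpa [intInvAction] using MulAut.zpow_apply_of_semiconj h_gen g.toAdd (ofAdd 1))
    (PresentedGroup.ext fun i ↦ by fin_cases i <;> simp)
    (hom_ext (MonoidHom.ext_mint (by simp)) (MonoidHom.ext_mint (by simp)))

theorem SemidirectProduct.nonempty_mulEquiv_prod_or_kleinBottleGroup
    (φ : Multiplicative ℤ →* MulAut (Multiplicative ℤ)) :
    Nonempty (Multiplicative ℤ ⋊[φ] Multiplicative ℤ ≃* Multiplicative ℤ × Multiplicative ℤ) ∨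
      Nonempty (Multiplicative ℤ ⋊[φ] Multiplicative ℤ ≃* KleinBottleGroup) := by
  rcases φ.eq_one_or_eq_intInvAction with rfl | rfl
  exacts [.inl ⟨mulEquivProd⟩, .inr ⟨kleinBottleGroupMulEquiv.symm⟩]

/-- Every extension of `ℤ` by `ℤ` is isomorphic either to `ℤ × ℤ` (the fundamental
group of the torus) or to the Klein bottle group `⟨a, b | a b a b⁻¹⟩`. -/
theorem extension_of_int_by_int_iso_torus_or_klein
    (G : Type) [Group G] (N : Subgroup G) [N.Normal]
    (hN : Nonempty (N ≃* Multiplicative ℤ))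
    (hQ : Nonempty ((G ⧸ N) ≃* Multiplicative ℤ)) :
    Nonempty (G ≃* Multiplicative ℤ × Multiplicative ℤ) ∨
      Nonempty (G ≃* KleinBottleGroup) := by
  obtain ⟨e⟩ := hN
  obtain ⟨q⟩ := hQ
  let s := (GroupExtension.ofNormal N e.symm q).splittingOfInt
  exact (SemidirectProduct.nonempty_mulEquiv_prod_or_kleinBottleGroup s.conjAct).imp
    (.map s.semidirectProductMulEquiv.symm.trans) (.map s.semidirectProductMulEquiv.symm.trans)
end

section
/- Let G be a group admitting subgroups G₀ ⊇ G₁ ⊇ G₂ such that G₂ is trivial, G₁ is normal in G₀ with G₀/G₁ ≅ ℤ, G₁ ≅ ℤ, and G₀ has finite index in G (i.e. G is VPC(2)). Then G has a finite-index subgroup isomorphic either to ℤ × ℤ (the fundamental group of the torus) or to the Klein bottle group ⟨a, b | a b a b⁻¹⟩. -/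
/-!
`G₀` is an extension of `ℤ` by `G₁ = ⟨x⟩ ≅ ℤ`. Lifting a generator of the quotient to `t ∈ G₀`,
every element of `G₀` is uniquely `x ^ m * t ^ n`, and conjugation by `t` is an automorphism of
`⟨x⟩ ≅ ℤ`, so `t x t⁻¹ = x ^ (± 1)`. With the sign `+` the normal form identifies `G₀` with
`ℤ × ℤ`; with the sign `-` the relation is that of the Klein bottle group, which has the same
normal form, so `G₀` itself is the required finite-index subgroup.
-/

open Subgroup

section NormalForm

variable {K : Type*} [Group K]

theorem Subgroup.exists_eq_zpowers_of_mulEquiv_int (H : Subgroup K)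
    (e : H ≃* Multiplicative ℤ) : ∃ x : K, H = zpowers x ∧ ¬IsOfFinOrder x := by
  set ξ : H := e.symm (Multiplicative.ofAdd 1)
  have hξ (y : H) : ξ ^ (e y).toAdd = y := e.injective <| by
    rw [map_zpow, MulEquiv.apply_symm_apply, ← ofAdd_zsmul, smul_eq_mul, mul_one, ofAdd_toAdd]
  refine ⟨ξ, le_antisymm (fun y hy ↦ ⟨_, congrArg Subtype.val (hξ ⟨y, hy⟩)⟩) ?_, ?_⟩
  · exact (zpowers_le (G := K)).mpr ξ.2
  · have hinj : Function.Injective (H.subtype.comp e.symm.toMonoidHom) :=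
      H.subtype_injective.comp e.symm.injective
    exact (hinj.isOfFinOrder_iff (x := Multiplicative.ofAdd 1)).not.mpr
      (not_isOfFinOrder_of_isMulTorsionFree (by decide))

theorem conj_eq_self_or_eq_inv_of_zpowers_normal {x : K} (hN : (zpowers x).Normal)
    (hx : ¬IsOfFinOrder x) (g : K) : g * x * g⁻¹ = x ∨ g * x * g⁻¹ = x⁻¹ := by
  obtain ⟨k, hk⟩ := mem_zpowers_iff.mp (hN.conj_mem x (mem_zpowers x) g)
  obtain ⟨l, hl⟩ := mem_zpowers_iff.mp (hN.conj_mem x (mem_zpowers x) g⁻¹)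
  have hlk : x ^ (l * k) = x ^ (1 : ℤ) := by
    rw [zpow_mul, hl, conj_zpow, hk]; group
  rcases Int.eq_one_or_neg_one_of_mul_eq_one' (injective_zpow_iff_not_isOfFinOrder.mpr hx hlk)
    with ⟨-, rfl⟩ | ⟨-, rfl⟩
  · exact .inl (by rw [← hk, zpow_one])
  · exact .inr (by rw [← hk, zpow_neg_one])

theorem bijective_zpow_mul_zpow_of_ker_eq_zpowers (π : K →* Multiplicative ℤ) {x t : K}
    (hker : π.ker = zpowers x) (hx : ¬IsOfFinOrder x) (ht : π t = Multiplicative.ofAdd 1) :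
    Function.Bijective fun p : ℤ × ℤ ↦ x ^ p.1 * t ^ p.2 := by
  have hπ (m n : ℤ) : π (x ^ m * t ^ n) = Multiplicative.ofAdd n := by
    rw [map_mul, map_zpow, map_zpow, MonoidHom.mem_ker.mp (hker ▸ mem_zpowers x), ht]
    simp [← ofAdd_zsmul]
  constructor
  · rintro ⟨m, n⟩ ⟨m', n'⟩ h
    obtain rfl : n = n' := by simpa [hπ] using congrArg π h
    simpa using injective_zpow_iff_not_isOfFinOrder.mpr hx (mul_right_cancel h)
  · intro g
    have : g * t ^ (-(π g).toAdd) ∈ zpowers x := by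
      rw [← hker, MonoidHom.mem_ker, map_mul, map_zpow, ht, ← ofAdd_zsmul]
      simp
    obtain ⟨m, hm⟩ := mem_zpowers_iff.mp this
    exact ⟨(m, (π g).toAdd), by simp [hm]⟩

theorem Subgroup.mem_normalizer_zpowers_of_conj_eq_inv {x t : K} (h : t * x * t⁻¹ = x⁻¹) :
    t ∈ normalizer (zpowers x : Set K) := by
  rw [mem_normalizer_iff_map_conj_eq, MonoidHom.map_zpowers, MonoidHom.coe_coe,
    MulAut.conj_apply, h, zpowers_inv]

theorem exists_zpow_mul_zpow_eq_of_closure_eq_top {x t : K} (hgen : closure {x, t} = ⊤)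
    (ht : t ∈ normalizer (zpowers x : Set K)) (g : K) : ∃ m n : ℤ, x ^ m * t ^ n = g := by
  have : (zpowers x).Normal := by
    rw [← normalizer_eq_top_iff, eq_top_iff, ← hgen, closure_le]
    rintro y (rfl | rfl)
    exacts [le_normalizer (mem_zpowers y), ht]
  have hg : g ∈ ((zpowers x ⊔ zpowers t : Subgroup K) : Set K) := by
    refine (closure_le _).mpr ?_ (hgen.ge (mem_top g))
    rintro y (rfl | rfl)
    exacts [mem_sup_left (mem_zpowers y), mem_sup_right (mem_zpowers y)]
  rw [normal_mul, Set.mem_mul] at hg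
  obtain ⟨_, ⟨m, rfl⟩, _, ⟨n, rfl⟩, rfl⟩ := hg
  exact ⟨m, n, rfl⟩

theorem nonempty_mulEquiv_int_prod_int_of_commute {x t : K} (hxt : Commute x t)
    (hnf : Function.Bijective fun p : ℤ × ℤ ↦ x ^ p.1 * t ^ p.2) :
    Nonempty (K ≃* Multiplicative ℤ × Multiplicative ℤ) :=
  let f := MonoidHom.noncommCoprod (zpowersHom K x) (zpowersHom K t)
    fun m n ↦ hxt.zpow_zpow m.toAdd n.toAdd
  ⟨(MulEquiv.ofBijective f
    (hnf.comp (Equiv.prodCongr Multiplicative.toAdd Multiplicative.toAdd).bijective)).symm⟩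

end NormalForm

namespace KleinBottleGroup

def a : KleinBottleGroup := PresentedGroup.of 0

def b : KleinBottleGroup := PresentedGroup.of 1

theorem b_mul_a_mul_b_inv : b * a * b⁻¹ = a⁻¹ := by
  have h : a * b * a * b⁻¹ = 1 :=
    (QuotientGroup.eq_one_iff _).mpr (subset_normalClosure rfl)
  rw [← mul_one a⁻¹, ← h]; group

theorem closure_a_b : closure {a, b} = ⊤ := by
  refine eq_top_iff.mpr ((PresentedGroup.closure_range_of kleinBottleRels).ge.trans
    (closure_mono ?_))
  rintro _ ⟨i, rfl⟩
  fin_cases i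
  exacts [.inl rfl, .inr rfl]

variable {K : Type*} [Group K] {x t : K}

def lift (h : t * x * t⁻¹ = x⁻¹) : KleinBottleGroup →* K :=
  PresentedGroup.toGroup (f := ![x, t]) <| by
    rintro _ rfl
    simp only [map_mul, map_inv, FreeGroup.lift_apply_of]
    show x * t * x * t⁻¹ = 1
    simp only [mul_assoc] at h ⊢
    rw [h, mul_inv_cancel]

theorem lift_a (h : t * x * t⁻¹ = x⁻¹) : lift h a = x := PresentedGroup.toGroup.of _

theorem lift_b (h : t * x * t⁻¹ = x⁻¹) : lift h b = t := PresentedGroup.toGroup.of _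

end KleinBottleGroup

open KleinBottleGroup in
theorem nonempty_mulEquiv_kleinBottleGroup {K : Type*} [Group K] {x t : K}
    (hxt : t * x * t⁻¹ = x⁻¹)
    (hnf : Function.Bijective fun p : ℤ × ℤ ↦ x ^ p.1 * t ^ p.2) :
    Nonempty (K ≃* KleinBottleGroup) := by
  have hlift (m n : ℤ) : lift hxt (a ^ m * b ^ n) = x ^ m * t ^ n := by
    rw [map_mul, map_zpow, map_zpow, lift_a, lift_b]
  refine ⟨(MulEquiv.ofBijective (lift hxt) ⟨?_, fun g ↦ ?_⟩).symm⟩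
  · rw [injective_iff_map_eq_one]
    intro k hk
    obtain ⟨m, n, rfl⟩ := exists_zpow_mul_zpow_eq_of_closure_eq_top closure_a_b
      (mem_normalizer_zpowers_of_conj_eq_inv b_mul_a_mul_b_inv) k
    obtain ⟨rfl, rfl⟩ := Prod.ext_iff.mp (hnf.1 (a₁ := (m, n)) (a₂ := (0, 0))
      (by simpa [hlift] using hk))
    simp
  · obtain ⟨⟨m, n⟩, rfl⟩ := hnf.2 g
    exact ⟨_, hlift m n⟩

theorem vpc2_virtually_torus_or_klein_general
    (G : Type) [Group G] (G₀ G₁ : Subgroup G)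
    (h10 : G₁ ≤ G₀)
    (hquot : ∃ _ : (G₁.subgroupOf G₀).Normal,
      Nonempty ((G₀ ⧸ G₁.subgroupOf G₀) ≃* Multiplicative ℤ))
    (hG1 : Nonempty (G₁ ≃* Multiplicative ℤ))
    (hfin : G₀.FiniteIndex) :
    ∃ H : Subgroup G, H.FiniteIndex ∧
      (Nonempty (H ≃* Multiplicative ℤ × Multiplicative ℤ) ∨
        Nonempty (H ≃* KleinBottleGroup)) := by
  obtain ⟨hN, ⟨ψ⟩⟩ := hquot
  obtain ⟨e⟩ := hG1
  obtain ⟨x, hNx, hx⟩ :=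
    (G₁.subgroupOf G₀).exists_eq_zpowers_of_mulEquiv_int ((subgroupOfEquivOfLe h10).trans e)
  let π := (ψ : G₀ ⧸ G₁.subgroupOf G₀ →* Multiplicative ℤ).comp (QuotientGroup.mk' _)
  have hker : π.ker = zpowers x := by
    rw [MonoidHom.ker_mulEquiv_comp, QuotientGroup.ker_mk', hNx]
  obtain ⟨t, ht⟩ := (ψ.surjective.comp (QuotientGroup.mk'_surjective _)) (.ofAdd 1)
  have hnf := bijective_zpow_mul_zpow_of_ker_eq_zpowers π hker hx ht
  refine ⟨G₀, hfin, ?_⟩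
  rcases conj_eq_self_or_eq_inv_of_zpowers_normal (hNx ▸ hN) hx t with h | h
  · exact .inl <|
      nonempty_mulEquiv_int_prod_int_of_commute (mul_inv_eq_iff_eq_mul.mp h).symm hnf
  · exact .inr (nonempty_mulEquiv_kleinBottleGroup h hnf)

/-- A `VPC(2)` group is virtually either the fundamental group of the torus
(`ℤ × ℤ`) or the fundamental group of the Klein bottle: if `G` has subgroups
`G₀ ⊇ G₁ ⊇ G₂` with `G₂` trivial, `G₁` normal in `G₀` with `G₀/G₁ ≅ ℤ`,
`G₁ ≅ ℤ`, and `G₀` of finite index in `G`, then `G` has a finite-index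
subgroup isomorphic to `ℤ × ℤ` or to the Klein bottle group. -/
theorem vpc2_virtually_torus_or_klein
    (G : Type) [Group G] (G₀ G₁ G₂ : Subgroup G)
    (hG2 : G₂ = ⊥)
    (h10 : G₁ ≤ G₀)
    (hquot : ∃ _ : (G₁.subgroupOf G₀).Normal,
      Nonempty ((G₀ ⧸ G₁.subgroupOf G₀) ≃* Multiplicative ℤ))
    (hG1 : Nonempty (G₁ ≃* Multiplicative ℤ))
    (hfin : G₀.FiniteIndex) :
    ∃ H : Subgroup G, H.FiniteIndex ∧
      (Nonempty (H ≃* Multiplicative ℤ × Multiplicative ℤ) ∨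
        Nonempty (H ≃* KleinBottleGroup)) :=
  vpc2_virtually_torus_or_klein_general G G₀ G₁ h10 hquot hG1 hfin
end
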